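/- Let ℛ and ℳ be disjoint finite sets of regular and malicious agents with |ℛ| = R ≥ 1 and |ℳ| = M ≥ 1. Let (θ_i)_{i∈ℛ∪ℳ} be pairwise uncorrelated real random variables with mean 0 and variance 1, and let (v_m)_{m∈ℳ} be pairwise uncorrelated real random variables with mean 0 and variance d ≥ 0, uncorrelated with all θ_i. Define θ̄_ℳ := (1/M)·Σ_{m∈ℳ}(θ_m + v_m) and θ̄_ℛ := (1/R)·Σ_{i∈ℛ} θ_i. Then E[Σ_{i∈ℛ}(θ̄_ℳ − θ̄_ℛ)²] = R/M + R·d/M + 1. -/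

import Mathlib

open MeasureTheory

private lemma memL2_mul_integrable {Ω : Type*} [MeasurableSpace Ω] {μ : Measure Ω}
    {f g : Ω → ℝ} (hf : MemLp f 2 μ) (hg : MemLp g 2 μ) :
    Integrable (fun ω => f ω * g ω) μ := by
  have h := ((hf.add hg).integrable_sq.sub hf.integrable_sq).sub hg.integrable_sq
  have heq : (fun ω => f ω * g ω)
      = fun ω => (((f ω + g ω) ^ 2 - f ω ^ 2) - g ω ^ 2) / 2 := by
    funext ω; ring
  rw [heq]; exact h.div_const 2

private lemma integral_sum_mul_sum {ι κ Ω : Type*} [MeasurableSpace Ω] (μ : Measure Ω)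
    (s : Finset ι) (t : Finset κ) (f : ι → Ω → ℝ) (g : κ → Ω → ℝ)
    (h : ∀ i ∈ s, ∀ j ∈ t, Integrable (fun ω => f i ω * g j ω) μ) :
    ∫ ω, (∑ i ∈ s, f i ω) * (∑ j ∈ t, g j ω) ∂μ
      = ∑ i ∈ s, ∑ j ∈ t, ∫ ω, f i ω * g j ω ∂μ := by
  have key : ∀ ω, (∑ i ∈ s, f i ω) * (∑ j ∈ t, g j ω)
      = ∑ i ∈ s, ∑ j ∈ t, f i ω * g j ω := by
    intro ω; rw [Finset.sum_mul_sum]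
  simp_rw [key]
  rw [integral_finset_sum s (fun i hi =>
    integrable_finset_sum t (fun j hj => h i hi j hj))]
  exact Finset.sum_congr rfl fun i hi =>
    integral_finset_sum t (fun j hj => h i hi j hj)

/-- With disjoint sets `ℛ` (regular, `|ℛ| = R ≥ 1`) and `ℳ` (malicious,
`|ℳ| = M ≥ 1`), priors `θ i` pairwise uncorrelated with mean `0`, variance `1`, noises
`v m` pairwise uncorrelated with mean `0`, variance `d ≥ 0`, uncorrelated with the priors,
`θ̄_ℳ = (1/M)·Σ_{m∈ℳ}(θ m + v m)` and `θ̄_ℛ = (1/R)·Σ_{i∈ℛ} θ i`, one has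
`E[Σ_{i∈ℛ}(θ̄_ℳ − θ̄_ℛ)²] = R/M + R·d/M + 1`. -/
theorem consensus_error_under_malicious_agents
    (ι : Type*) [DecidableEq ι] (ℛ ℳ : Finset ι) (hdisj : Disjoint ℛ ℳ)
    (R M : ℕ) (hR : R = ℛ.card) (hM : M = ℳ.card) (hR1 : 1 ≤ R) (hM1 : 1 ≤ M)
    (Ω : Type*) [MeasurableSpace Ω] (μ : Measure Ω) [IsProbabilityMeasure μ]
    (θ v : ι → Ω → ℝ) (d : ℝ) (hd : 0 ≤ d)
    (hθL2 : ∀ i ∈ ℛ ∪ ℳ, MemLp (θ i) 2 μ)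
    (hvL2 : ∀ m ∈ ℳ, MemLp (v m) 2 μ)
    (hθmean : ∀ i ∈ ℛ ∪ ℳ, ∫ ω, θ i ω ∂μ = 0)
    (hθvar : ∀ i ∈ ℛ ∪ ℳ, ∫ ω, (θ i ω) ^ 2 ∂μ = 1)
    (hθuncorr : ∀ i ∈ ℛ ∪ ℳ, ∀ j ∈ ℛ ∪ ℳ, i ≠ j → ∫ ω, θ i ω * θ j ω ∂μ = 0)
    (hvmean : ∀ m ∈ ℳ, ∫ ω, v m ω ∂μ = 0)
    (hvvar : ∀ m ∈ ℳ, ∫ ω, (v m ω) ^ 2 ∂μ = d)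
    (hvuncorr : ∀ m ∈ ℳ, ∀ m' ∈ ℳ, m ≠ m' → ∫ ω, v m ω * v m' ω ∂μ = 0)
    (hcross : ∀ i ∈ ℛ ∪ ℳ, ∀ m ∈ ℳ, ∫ ω, θ i ω * v m ω ∂μ = 0) :
    ∫ ω, ∑ _i ∈ ℛ,
        ((M : ℝ)⁻¹ * (∑ m ∈ ℳ, (θ m ω + v m ω)) - (R : ℝ)⁻¹ * (∑ j ∈ ℛ, θ j ω)) ^ 2 ∂μ
      = R / M + R * d / M + 1 := by
  -- membership helpers
  have hMsub : ∀ m ∈ ℳ, m ∈ ℛ ∪ ℳ := fun m hm => Finset.mem_union_right _ hm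
  have hRsub : ∀ i ∈ ℛ, i ∈ ℛ ∪ ℳ := fun i hi => Finset.mem_union_left _ hi
  -- u m = θ m + v m, L2
  set u : ι → Ω → ℝ := fun m ω => θ m ω + v m ω with hu_def
  have huL2 : ∀ m ∈ ℳ, MemLp (u m) 2 μ := fun m hm =>
    (hθL2 m (hMsub m hm)).add (hvL2 m hm)
  -- integrability of all products
  have Iuu : ∀ m ∈ ℳ, ∀ m' ∈ ℳ, Integrable (fun ω => u m ω * u m' ω) μ :=
    fun m hm m' hm' => memL2_mul_integrable (huL2 m hm) (huL2 m' hm')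
  have Iuθ : ∀ m ∈ ℳ, ∀ j ∈ ℛ, Integrable (fun ω => u m ω * θ j ω) μ :=
    fun m hm j hj => memL2_mul_integrable (huL2 m hm) (hθL2 j (hRsub j hj))
  have Iθθ : ∀ i ∈ ℛ, ∀ j ∈ ℛ, Integrable (fun ω => θ i ω * θ j ω) μ :=
    fun i hi j hj =>
      memL2_mul_integrable (hθL2 i (hRsub i hi)) (hθL2 j (hRsub j hj))
  -- second moments of u
  have huu : ∀ m ∈ ℳ, ∀ m' ∈ ℳ, ∫ ω, u m ω * u m' ω ∂μ
      = if m = m' then 1 + d else 0 := by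
    intro m hm m' hm'
    have e1 : Integrable (fun ω => θ m ω * θ m' ω) μ :=
      memL2_mul_integrable (hθL2 m (hMsub m hm)) (hθL2 m' (hMsub m' hm'))
    have e2 : Integrable (fun ω => θ m ω * v m' ω) μ :=
      memL2_mul_integrable (hθL2 m (hMsub m hm)) (hvL2 m' hm')
    have e3 : Integrable (fun ω => v m ω * θ m' ω) μ :=
      memL2_mul_integrable (hvL2 m hm) (hθL2 m' (hMsub m' hm'))
    have e4 : Integrable (fun ω => v m ω * v m' ω) μ :=
      memL2_mul_integrable (hvL2 m hm) (hvL2 m' hm')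
    have expand : (fun ω => u m ω * u m' ω)
        = fun ω => (θ m ω * θ m' ω + θ m ω * v m' ω)
            + (v m ω * θ m' ω + v m ω * v m' ω) := by
      funext ω; simp only [hu_def]; ring
    have e12 : Integrable (fun ω => θ m ω * θ m' ω + θ m ω * v m' ω) μ := e1.add e2
    have e34 : Integrable (fun ω => v m ω * θ m' ω + v m ω * v m' ω) μ := e3.add e4
    rw [expand, integral_add e12 e34, integral_add e1 e2, integral_add e3 e4]
    have h3 : ∫ ω, v m ω * θ m' ω ∂μ = 0 := by
      simp_rw [mul_comm]; exact hcross m' (hMsub m' hm') m hm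
    rw [hcross m (hMsub m hm) m' hm', h3]
    by_cases hmm : m = m'
    · subst hmm
      have : (fun ω => θ m ω * θ m ω) = fun ω => (θ m ω) ^ 2 := by
        funext ω; ring
      have hv2 : (fun ω => v m ω * v m ω) = fun ω => (v m ω) ^ 2 := by
        funext ω; ring
      rw [if_pos rfl, this, hv2, hθvar m (hMsub m hm), hvvar m hm]; ring
    · rw [hθuncorr m (hMsub m hm) m' (hMsub m' hm') hmm,
        hvuncorr m hm m' hm' hmm, if_neg hmm]; ring
  -- cross moments u · θ (regular)
  have huθ : ∀ m ∈ ℳ, ∀ j ∈ ℛ, ∫ ω, u m ω * θ j ω ∂μ = 0 := by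
    intro m hm j hj
    have e1 : Integrable (fun ω => θ m ω * θ j ω) μ :=
      memL2_mul_integrable (hθL2 m (hMsub m hm)) (hθL2 j (hRsub j hj))
    have e2 : Integrable (fun ω => v m ω * θ j ω) μ :=
      memL2_mul_integrable (hvL2 m hm) (hθL2 j (hRsub j hj))
    have expand : (fun ω => u m ω * θ j ω)
        = fun ω => θ m ω * θ j ω + v m ω * θ j ω := by
      funext ω; simp only [hu_def]; ring
    rw [expand, integral_add e1 e2]
    have hne : m ≠ j := fun h => (Finset.disjoint_right.mp hdisj hm) (h ▸ hj)
    have h2 : ∫ ω, v m ω * θ j ω ∂μ = 0 := by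
      simp_rw [mul_comm]; exact hcross j (hRsub j hj) m hm
    rw [hθuncorr m (hMsub m hm) j (hRsub j hj) hne, h2, add_zero]
  -- θθ moments on ℛ
  have hθθ : ∀ i ∈ ℛ, ∀ j ∈ ℛ, ∫ ω, θ i ω * θ j ω ∂μ
      = if i = j then 1 else 0 := by
    intro i hi j hj
    by_cases hij : i = j
    · subst hij
      have : (fun ω => θ i ω * θ i ω) = fun ω => (θ i ω) ^ 2 := by
        funext ω; ring
      rw [if_pos rfl, this]; exact hθvar i (hRsub i hi)
    · rw [if_neg hij]; exact hθuncorr i (hRsub i hi) j (hRsub j hj) hij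
  -- the three integrals of sums
  have ISA : ∫ ω, (∑ m ∈ ℳ, u m ω) * (∑ m' ∈ ℳ, u m' ω) ∂μ = M * (1 + d) := by
    rw [integral_sum_mul_sum μ ℳ ℳ u u Iuu]
    have : ∀ m ∈ ℳ, ∑ m' ∈ ℳ, ∫ ω, u m ω * u m' ω ∂μ = 1 + d := by
      intro m hm
      rw [Finset.sum_congr rfl (fun m' hm' => huu m hm m' hm')]
      simp [Finset.sum_ite_eq, hm]
    rw [Finset.sum_congr rfl this, Finset.sum_const, hM, nsmul_eq_mul]
  have ISB : ∫ ω, (∑ m ∈ ℳ, u m ω) * (∑ j ∈ ℛ, θ j ω) ∂μ = 0 := by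
    rw [integral_sum_mul_sum μ ℳ ℛ u θ Iuθ]
    exact Finset.sum_eq_zero fun m hm =>
      Finset.sum_eq_zero fun j hj => huθ m hm j hj
  have IRR : ∫ ω, (∑ i ∈ ℛ, θ i ω) * (∑ j ∈ ℛ, θ j ω) ∂μ = R := by
    rw [integral_sum_mul_sum μ ℛ ℛ θ θ Iθθ]
    have : ∀ i ∈ ℛ, ∑ j ∈ ℛ, ∫ ω, θ i ω * θ j ω ∂μ = 1 := by
      intro i hi
      rw [Finset.sum_congr rfl (fun j hj => hθθ i hi j hj)]
      simp [Finset.sum_ite_eq, hi]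
    rw [Finset.sum_congr rfl this, Finset.sum_const, hR, nsmul_eq_mul, mul_one]
  -- integrability of the sums' products
  have hSAL2 : MemLp (fun ω => ∑ m ∈ ℳ, u m ω) 2 μ := by
    have h := memLp_finset_sum' ℳ huL2
    have heq : (∑ i ∈ ℳ, u i) = fun ω => ∑ m ∈ ℳ, u m ω := by
      funext ω; simp
    rwa [heq] at h
  have hSRL2 : MemLp (fun ω => ∑ j ∈ ℛ, θ j ω) 2 μ := by
    have h := memLp_finset_sum' ℛ (fun i hi => hθL2 i (hRsub i hi))
    have heq : (∑ i ∈ ℛ, θ i) = fun ω => ∑ j ∈ ℛ, θ j ω := by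
      funext ω; simp
    rwa [heq] at h
  have ISAint : Integrable (fun ω => (∑ m ∈ ℳ, u m ω) * (∑ m' ∈ ℳ, u m' ω)) μ :=
    memL2_mul_integrable hSAL2 hSAL2
  have ISBint : Integrable (fun ω => (∑ m ∈ ℳ, u m ω) * (∑ j ∈ ℛ, θ j ω)) μ :=
    memL2_mul_integrable hSAL2 hSRL2
  have IRRint : Integrable (fun ω => (∑ i ∈ ℛ, θ i ω) * (∑ j ∈ ℛ, θ j ω)) μ :=
    memL2_mul_integrable hSRL2 hSRL2
  -- main computation
  have hMpos : (0:ℝ) < M := by exact_mod_cast hM1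
  have hRpos : (0:ℝ) < R := by exact_mod_cast hR1
  have key : (fun ω => ∑ _i ∈ ℛ,
      ((M : ℝ)⁻¹ * (∑ m ∈ ℳ, (θ m ω + v m ω)) - (R : ℝ)⁻¹ * (∑ j ∈ ℛ, θ j ω)) ^ 2)
      = fun ω => (R : ℝ) *
        ((M : ℝ)⁻¹ * (M : ℝ)⁻¹ * ((∑ m ∈ ℳ, u m ω) * (∑ m' ∈ ℳ, u m' ω))
          - 2 * ((M : ℝ)⁻¹ * (R : ℝ)⁻¹ * ((∑ m ∈ ℳ, u m ω) * (∑ j ∈ ℛ, θ j ω)))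
          + (R : ℝ)⁻¹ * (R : ℝ)⁻¹ * ((∑ i ∈ ℛ, θ i ω) * (∑ j ∈ ℛ, θ j ω))) := by
    funext ω
    rw [Finset.sum_const, hR, nsmul_eq_mul]
    simp only [hu_def]
    ring
  have J1 : Integrable (fun ω =>
      (M : ℝ)⁻¹ * (M : ℝ)⁻¹ * ((∑ m ∈ ℳ, u m ω) * (∑ m' ∈ ℳ, u m' ω))) μ :=
    ISAint.const_mul _
  have J2 : Integrable (fun ω =>
      2 * ((M : ℝ)⁻¹ * (R : ℝ)⁻¹ * ((∑ m ∈ ℳ, u m ω) * (∑ j ∈ ℛ, θ j ω)))) μ :=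
    (ISBint.const_mul _).const_mul _
  have J3 : Integrable (fun ω =>
      (R : ℝ)⁻¹ * (R : ℝ)⁻¹ * ((∑ i ∈ ℛ, θ i ω) * (∑ j ∈ ℛ, θ j ω))) μ :=
    IRRint.const_mul _
  have J12 : Integrable (fun ω =>
      (M : ℝ)⁻¹ * (M : ℝ)⁻¹ * ((∑ m ∈ ℳ, u m ω) * (∑ m' ∈ ℳ, u m' ω))
        - 2 * ((M : ℝ)⁻¹ * (R : ℝ)⁻¹ * ((∑ m ∈ ℳ, u m ω) * (∑ j ∈ ℛ, θ j ω)))) μ :=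
    J1.sub J2
  rw [key, integral_const_mul, integral_add J12 J3, integral_sub J1 J2]
  simp only [integral_const_mul]
  rw [ISA, ISB, IRR]
  field_simp
  ring
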